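/- arXiv:2003.14374 — 3 statements merged into one kernel-verified Lean document; each statement's English description precedes it below -/
import Mathlib

section
/- For all real numbers x and s, the integral ∫_s^∞ Ai(x+u)² du converges and equals (Ai'(x+s))² − (x+s)·Ai(x+s)². -/
/-
Write `φ = t³/3 + x t`, so that `∂ₜ φ = t² + x`. Two integrations by parts against
`d(sin φ) = (t² + x) cos φ dt` turn `∫_a^R cos φ dt` into a boundary term plus the integral over
`[a, R]` of an integrand of order `t⁻⁶`, which stays integrable after two derivatives in `x`, as
long as `t² + x` stays away from `0` on `[a, ∞)`. Letting `R → ∞` gives a representation of `π Ai`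
near any point that may be differentiated twice under the integral sign, and `Ai'' = x Ai`
because `(∂ₓ² - x) cos φ = -∂ₜ sin φ`. With `a = 0` the same representation shows that `Ai y` and
`Ai' y` are `O(1/y)`. Hence `E = Ai'² - x Ai²` satisfies `E' = -Ai²` and tends to `0` at `+∞`,
so that `∫_s^∞ Ai(x+u)² du = E(x+s)`.
-/

open MeasureTheory Filter Set Topology

noncomputable section

namespace Airy

def phase (x t : ℝ) : ℝ := t ^ 3 / 3 + x * t

-- Two integrations by parts give `∫_a^R cos (phase x t) dt = [boundary0 x]_a^R + ∫_a^R tail0 x`;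
-- the indices 1 and 2 mark successive derivatives in `x`.
def weight0 (x t : ℝ) : ℝ := (2 * x - 10 * t ^ 2) / (t ^ 2 + x) ^ 4

def weight1 (x t : ℝ) : ℝ := (2 * (t ^ 2 + x) - 4 * (2 * x - 10 * t ^ 2)) / (t ^ 2 + x) ^ 5

def weight2 (x t : ℝ) : ℝ := (20 * (2 * x - 10 * t ^ 2) - 16 * (t ^ 2 + x)) / (t ^ 2 + x) ^ 6

def tail0 (x t : ℝ) : ℝ := Real.cos (phase x t) * weight0 x t

def tail1 (x t : ℝ) : ℝ :=
  -(t * Real.sin (phase x t) * weight0 x t) + Real.cos (phase x t) * weight1 x t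

def tail2 (x t : ℝ) : ℝ :=
  -(t ^ 2 * Real.cos (phase x t) * weight0 x t) - 2 * t * Real.sin (phase x t) * weight1 x t
    + Real.cos (phase x t) * weight2 x t

def boundary0 (x t : ℝ) : ℝ :=
  Real.sin (phase x t) / (t ^ 2 + x) - 2 * t * Real.cos (phase x t) / (t ^ 2 + x) ^ 3

def boundary1 (x t : ℝ) : ℝ :=
  t * Real.cos (phase x t) / (t ^ 2 + x) - Real.sin (phase x t) / (t ^ 2 + x) ^ 2
    + 2 * t ^ 2 * Real.sin (phase x t) / (t ^ 2 + x) ^ 3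
    + 6 * t * Real.cos (phase x t) / (t ^ 2 + x) ^ 4

def boundary2 (x t : ℝ) : ℝ :=
  -(t ^ 2 * Real.sin (phase x t) / (t ^ 2 + x)) - 2 * t * Real.cos (phase x t) / (t ^ 2 + x) ^ 2
    + 2 * Real.sin (phase x t) / (t ^ 2 + x) ^ 3
    + 2 * t ^ 3 * Real.cos (phase x t) / (t ^ 2 + x) ^ 3
    - 12 * t ^ 2 * Real.sin (phase x t) / (t ^ 2 + x) ^ 4
    - 24 * t * Real.cos (phase x t) / (t ^ 2 + x) ^ 5

-- A `t`-primitive of `tail2 x - x * tail0 x`.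
def defectPrimitive (x t : ℝ) : ℝ :=
  -(2 * Real.sin (phase x t) / (t ^ 2 + x) ^ 3)
    + 12 * t ^ 2 * Real.sin (phase x t) / (t ^ 2 + x) ^ 4
    + 24 * t * Real.cos (phase x t) / (t ^ 2 + x) ^ 5

-- `regIntegralₖ a x` is `∫_0^∞ ∂ₓᵏ cos (phase x t) dt`, regularized on `[a, ∞)` as above.
def regIntegral0 (a x : ℝ) : ℝ :=
  (∫ t in Ioc 0 a, Real.cos (phase x t)) - boundary0 x a + ∫ t in Ioi a, tail0 x t

def regIntegral1 (a x : ℝ) : ℝ :=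
  (∫ t in Ioc 0 a, -(t * Real.sin (phase x t))) - boundary1 x a + ∫ t in Ioi a, tail1 x t

def regIntegral2 (a x : ℝ) : ℝ :=
  (∫ t in Ioc 0 a, -(t ^ 2 * Real.cos (phase x t))) - boundary2 x a + ∫ t in Ioi a, tail2 x t

lemma hasDerivAt_phase_t (x t : ℝ) : HasDerivAt (phase x) (t ^ 2 + x) t := by
  refine (((hasDerivAt_pow 3 t).div_const 3).add ((hasDerivAt_id t).const_mul x)).congr_deriv ?_
  ring

lemma hasDerivAt_phase_x (x t : ℝ) : HasDerivAt (phase · t) t x :=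
  (((hasDerivAt_id x).mul_const t).const_add (t ^ 3 / 3)).congr_deriv (one_mul t)

lemma hasDerivAt_denom_t (x t : ℝ) : HasDerivAt (fun t => t ^ 2 + x) (2 * t) t := by
  simpa using (hasDerivAt_pow 2 t).add_const x

lemma hasDerivAt_boundary0_t {x t : ℝ} (hD : t ^ 2 + x ≠ 0) :
    HasDerivAt (boundary0 x) (Real.cos (phase x t) - tail0 x t) t := by
  have hφ := hasDerivAt_phase_t x t
  have hD' := hasDerivAt_denom_t x t
  refine ((hφ.sin.div hD' hD).sub ((((hasDerivAt_id t).const_mul 2).mul hφ.cos).div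
    (hD'.pow 3) (pow_ne_zero 3 hD))).congr_deriv ?_
  simp only [tail0, weight0, id, Pi.pow_apply, Pi.mul_apply]
  field_simp
  ring

lemma hasDerivAt_defectPrimitive_t {x t : ℝ} (hD : t ^ 2 + x ≠ 0) :
    HasDerivAt (defectPrimitive x) (tail2 x t - x * tail0 x t) t := by
  have hφ := hasDerivAt_phase_t x t
  have hD' := hasDerivAt_denom_t x t
  refine (((hφ.sin.const_mul 2).div (hD'.pow 3) (pow_ne_zero 3 hD)).neg.add
    ((((hasDerivAt_pow 2 t).const_mul 12).mul hφ.sin).div (hD'.pow 4) (pow_ne_zero 4 hD)) |>.add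
    ((((hasDerivAt_id t).const_mul 24).mul hφ.cos).div (hD'.pow 5)
      (pow_ne_zero 5 hD))).congr_deriv ?_
  simp only [tail0, tail2, weight0, weight1, weight2, id, Pi.pow_apply, Pi.mul_apply]
  field_simp
  ring

lemma hasDerivAt_denom_pow_x (n : ℕ) (x t : ℝ) :
    HasDerivAt (fun x => (t ^ 2 + x) ^ n) (n * (t ^ 2 + x) ^ (n - 1)) x := by
  simpa using ((hasDerivAt_id x).const_add (t ^ 2)).fun_pow n

lemma hasDerivAt_weight0_x {x t : ℝ} (hD : t ^ 2 + x ≠ 0) :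
    HasDerivAt (weight0 · t) (weight1 x t) x := by
  refine ((((hasDerivAt_id x).const_mul 2).sub_const (10 * t ^ 2)).div
    (hasDerivAt_denom_pow_x 4 x t) (pow_ne_zero 4 hD)).congr_deriv ?_
  simp only [weight1, id]
  field_simp
  ring

lemma hasDerivAt_weight1_x {x t : ℝ} (hD : t ^ 2 + x ≠ 0) :
    HasDerivAt (weight1 · t) (weight2 x t) x := by
  refine (((((hasDerivAt_id x).const_add (t ^ 2)).const_mul 2).sub
    ((((hasDerivAt_id x).const_mul 2).sub_const (10 * t ^ 2)).const_mul 4)).div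
    (hasDerivAt_denom_pow_x 5 x t) (pow_ne_zero 5 hD)).congr_deriv ?_
  simp only [weight2, id, Pi.sub_apply]
  field_simp
  ring

lemma hasDerivAt_tail0_x {x t : ℝ} (hD : t ^ 2 + x ≠ 0) :
    HasDerivAt (tail0 · t) (tail1 x t) x := by
  refine ((hasDerivAt_phase_x x t).cos.mul (hasDerivAt_weight0_x hD)).congr_deriv ?_
  simp only [tail1]
  ring

lemma hasDerivAt_tail1_x {x t : ℝ} (hD : t ^ 2 + x ≠ 0) :
    HasDerivAt (tail1 · t) (tail2 x t) x := by
  have hφ := hasDerivAt_phase_x x t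
  refine (((hφ.sin.const_mul t).mul (hasDerivAt_weight0_x hD)).neg.add
    (hφ.cos.mul (hasDerivAt_weight1_x hD))).congr_deriv ?_
  simp only [tail2]
  ring

lemma hasDerivAt_boundary0_x {x t : ℝ} (hD : t ^ 2 + x ≠ 0) :
    HasDerivAt (boundary0 · t) (boundary1 x t) x := by
  have hφ := hasDerivAt_phase_x x t
  refine ((hφ.sin.div ((hasDerivAt_id x).const_add (t ^ 2)) hD).sub
    ((hφ.cos.const_mul (2 * t)).div (hasDerivAt_denom_pow_x 3 x t)
      (pow_ne_zero 3 hD))).congr_deriv ?_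
  simp only [boundary1, id]
  field_simp
  ring

lemma hasDerivAt_boundary1_x {x t : ℝ} (hD : t ^ 2 + x ≠ 0) :
    HasDerivAt (boundary1 · t) (boundary2 x t) x := by
  have hφ := hasDerivAt_phase_x x t
  refine (((((hφ.cos.const_mul t).div ((hasDerivAt_id x).const_add (t ^ 2)) hD).sub
    (hφ.sin.div (hasDerivAt_denom_pow_x 2 x t) (pow_ne_zero 2 hD))).add
    ((hφ.sin.const_mul (2 * t ^ 2)).div (hasDerivAt_denom_pow_x 3 x t) (pow_ne_zero 3 hD))).add
    ((hφ.cos.const_mul (6 * t)).div (hasDerivAt_denom_pow_x 4 x t)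
      (pow_ne_zero 4 hD))).congr_deriv ?_
  simp only [boundary2, id]
  field_simp
  ring

lemma boundary2_sub_mul_boundary0 {x t : ℝ} (hD : t ^ 2 + x ≠ 0) :
    boundary2 x t - x * boundary0 x t = -Real.sin (phase x t) - defectPrimitive x t := by
  simp only [boundary2, boundary0, defectPrimitive]
  field_simp
  ring

lemma abs_div_pow_succ_le {p D K : ℝ} (n : ℕ) (hD : 0 < D) (hp : |p| ≤ K * D) :
    |p / D ^ (n + 1)| ≤ K / D ^ n := by
  rw [abs_div, abs_of_pos (pow_pos hD _), div_le_div_iff₀ (pow_pos hD _) (pow_pos hD _)]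
  calc |p| * D ^ n ≤ K * D * D ^ n := by gcongr
    _ = K * D ^ (n + 1) := by ring

lemma div_pow_le_div_pow {D K : ℝ} {m n : ℕ} (hD : 1 ≤ D) (hK : 0 ≤ K) (hmn : m ≤ n) :
    K / D ^ n ≤ K / D ^ m :=
  div_le_div_of_nonneg_left hK (by positivity) (pow_le_pow_right₀ hD hmn)

lemma abs_div_pow_le_div {p D K : ℝ} (m : ℕ) (hD : 1 ≤ D) (hp : |p| ≤ K * D ^ m) :
    |p / D ^ (m + 1)| ≤ K / D := by
  have hD0 : 0 < D := one_pos.trans_le hD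
  rw [abs_div, abs_of_pos (pow_pos hD0 _), div_le_div_iff₀ (pow_pos hD0 _) hD0, pow_succ]
  nlinarith

lemma mul_abs_le_div_pow {s w K D : ℝ} (k n : ℕ) (hD : 0 < D) (hs : s ≤ D ^ k)
    (hw : |w| ≤ K / D ^ (n + k)) : s * |w| ≤ K / D ^ n := by
  calc s * |w| ≤ D ^ k * (K / D ^ (n + k)) := mul_le_mul hs hw (abs_nonneg w) (pow_nonneg hD.le k)
    _ = K / D ^ n := by rw [pow_add]; field_simp

lemma abs_term_div_le {C t σ D : ℝ} {k m : ℕ} (hkm : k ≤ m) (hD : 1 ≤ D) (ht : |t| ≤ D)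
    (hσ : |σ| ≤ 1) : |C * t ^ k * σ / D ^ (m + 1)| ≤ |C| / D := by
  refine abs_div_pow_le_div m hD ?_
  rw [abs_mul, abs_mul, abs_pow]
  calc |C| * |t| ^ k * |σ| ≤ |C| * D ^ k * 1 := by gcongr
    _ ≤ |C| * D ^ m := by rw [mul_one]; gcongr

lemma abs_tail1_le_add (x t : ℝ) : |tail1 x t| ≤ |t| * |weight0 x t| + |weight1 x t| := by
  have hs := Real.abs_sin_le_one (phase x t)
  have hc := Real.abs_cos_le_one (phase x t)
  calc |tail1 x t| ≤ |t| * |Real.sin (phase x t)| * |weight0 x t|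
        + |Real.cos (phase x t)| * |weight1 x t| := by
        rw [tail1]
        refine (abs_add_le _ _).trans_eq ?_
        simp only [abs_neg, abs_mul]
    _ ≤ |t| * 1 * |weight0 x t| + 1 * |weight1 x t| := by gcongr
    _ = |t| * |weight0 x t| + |weight1 x t| := by ring

lemma abs_tail2_le_add (x t : ℝ) :
    |tail2 x t| ≤ t ^ 2 * |weight0 x t| + 2 * (|t| * |weight1 x t|) + |weight2 x t| := by
  have hs := Real.abs_sin_le_one (phase x t)
  have hc := Real.abs_cos_le_one (phase x t)
  calc |tail2 x t| ≤ t ^ 2 * |Real.cos (phase x t)| * |weight0 x t|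
        + 2 * |t| * |Real.sin (phase x t)| * |weight1 x t|
        + |Real.cos (phase x t)| * |weight2 x t| := by
        rw [tail2]
        refine (abs_add_le _ _).trans ((add_le_add_left (abs_sub _ _) _).trans_eq ?_)
        simp only [abs_neg, abs_mul, abs_pow, sq_abs, abs_two]
    _ ≤ t ^ 2 * 1 * |weight0 x t| + 2 * |t| * 1 * |weight1 x t| + 1 * |weight2 x t| := by
        gcongr
    _ = t ^ 2 * |weight0 x t| + 2 * (|t| * |weight1 x t|) + |weight2 x t| := by ring

-- The region where the tail estimates hold; `t ^ 2 + x` is the `t`-derivative of the phase and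
-- `2 * x - 10 * t ^ 2` the numerator of `weight0`.
structure Admissible (c x t : ℝ) : Prop where
  one_le_denom : 1 ≤ t ^ 2 + x
  abs_le_denom : |t| ≤ t ^ 2 + x
  abs_numerator_le : |2 * x - 10 * t ^ 2| ≤ c * (t ^ 2 + x)

namespace Admissible

variable {c x t : ℝ} (h : Admissible c x t)
include h

lemma pos : 0 < t ^ 2 + x := one_pos.trans_le h.one_le_denom

lemma nonneg : 0 ≤ c :=
  nonneg_of_mul_nonneg_left ((abs_nonneg _).trans h.abs_numerator_le) h.pos

lemma abs_weight0_le : |weight0 x t| ≤ c / (t ^ 2 + x) ^ 3 :=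
  abs_div_pow_succ_le 3 h.pos h.abs_numerator_le

lemma abs_weight1_le : |weight1 x t| ≤ (4 * c + 2) / (t ^ 2 + x) ^ 4 := by
  refine abs_div_pow_succ_le 4 h.pos ?_
  have := abs_le.mp h.abs_numerator_le
  have := h.pos
  rw [abs_le]
  constructor <;> linarith

lemma abs_weight2_le : |weight2 x t| ≤ (20 * c + 16) / (t ^ 2 + x) ^ 5 := by
  refine abs_div_pow_succ_le 5 h.pos ?_
  have := abs_le.mp h.abs_numerator_le
  have := h.pos
  rw [abs_le]
  constructor <;> linarith

lemma abs_tail0_le : |tail0 x t| ≤ c / (t ^ 2 + x) ^ 2 := by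
  calc |tail0 x t| ≤ |weight0 x t| := by
        rw [tail0, abs_mul]; exact mul_le_of_le_one_left (abs_nonneg _) (Real.abs_cos_le_one _)
    _ ≤ c / (t ^ 2 + x) ^ 3 := h.abs_weight0_le
    _ ≤ c / (t ^ 2 + x) ^ 2 := div_pow_le_div_pow h.one_le_denom h.nonneg (by norm_num)

lemma abs_tail1_le : |tail1 x t| ≤ (5 * c + 2) / (t ^ 2 + x) ^ 2 := by
  have hc := h.nonneg
  calc |tail1 x t| ≤ |t| * |weight0 x t| + |weight1 x t| := abs_tail1_le_add x t
    _ ≤ c / (t ^ 2 + x) ^ 2 + (4 * c + 2) / (t ^ 2 + x) ^ 2 := by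
        gcongr
        · exact mul_abs_le_div_pow 1 2 h.pos (by simpa using h.abs_le_denom)
            h.abs_weight0_le
        · exact h.abs_weight1_le.trans
            (div_pow_le_div_pow h.one_le_denom (by positivity) (by norm_num))
    _ = (5 * c + 2) / (t ^ 2 + x) ^ 2 := by ring

lemma abs_tail2_le : |tail2 x t| ≤ (29 * c + 20) / (t ^ 2 + x) := by
  have hc := h.nonneg
  have hD := h.one_le_denom
  have ht2 : t ^ 2 ≤ (t ^ 2 + x) ^ 2 :=
    (sq_abs t).symm.trans_le (pow_le_pow_left₀ (abs_nonneg t) h.abs_le_denom 2)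
  calc |tail2 x t| ≤ t ^ 2 * |weight0 x t| + 2 * (|t| * |weight1 x t|) + |weight2 x t| :=
        abs_tail2_le_add x t
    _ ≤ c / (t ^ 2 + x) ^ 1 + 2 * ((4 * c + 2) / (t ^ 2 + x) ^ 3)
        + (20 * c + 16) / (t ^ 2 + x) ^ 5 := by
        gcongr
        · exact mul_abs_le_div_pow 2 1 h.pos ht2 h.abs_weight0_le
        · exact mul_abs_le_div_pow 1 3 h.pos (by simpa using h.abs_le_denom)
            h.abs_weight1_le
        · exact h.abs_weight2_le
    _ ≤ c / (t ^ 2 + x) ^ 1 + 2 * ((4 * c + 2) / (t ^ 2 + x) ^ 1)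
        + (20 * c + 16) / (t ^ 2 + x) ^ 1 := by
        gcongr <;> norm_num
    _ = (29 * c + 20) / (t ^ 2 + x) := by ring

lemma abs_boundary0_le : |boundary0 x t| ≤ 3 / (t ^ 2 + x) := by
  have hD := h.one_le_denom
  have ht := h.abs_le_denom
  have h1 := abs_term_div_le (C := 1) (k := 0) (m := 0) le_rfl hD ht
    (Real.abs_sin_le_one (phase x t))
  have h2 := abs_term_div_le (C := 2) (k := 1) (m := 2) (by norm_num) hD ht
    (Real.abs_cos_le_one (phase x t))
  simp only [one_mul, pow_zero, zero_add, pow_one, abs_one, abs_two] at h1 h2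
  calc |boundary0 x t| ≤ 1 / (t ^ 2 + x) + 2 / (t ^ 2 + x) :=
        (abs_sub _ _).trans (add_le_add h1 h2)
    _ = 3 / (t ^ 2 + x) := by ring

lemma abs_defectPrimitive_le : |defectPrimitive x t| ≤ 38 / (t ^ 2 + x) := by
  have hD := h.one_le_denom
  have ht := h.abs_le_denom
  have h1 := abs_term_div_le (C := 2) (k := 0) (m := 2) (by norm_num) hD ht
    (Real.abs_sin_le_one (phase x t))
  have h2 := abs_term_div_le (C := 12) (k := 2) (m := 3) (by norm_num) hD ht
    (Real.abs_sin_le_one (phase x t))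
  have h3 := abs_term_div_le (C := 24) (k := 1) (m := 4) (by norm_num) hD ht
    (Real.abs_cos_le_one (phase x t))
  norm_num only [pow_zero, mul_one, pow_one, abs_two] at h1 h2 h3
  calc |defectPrimitive x t| ≤ 2 / (t ^ 2 + x) + 12 / (t ^ 2 + x) + 24 / (t ^ 2 + x) := by
        rw [defectPrimitive]
        refine (abs_add_le _ _).trans (add_le_add ((abs_add_le _ _).trans (add_le_add ?_ h2)) h3)
        rwa [abs_neg]
    _ = 38 / (t ^ 2 + x) := by ring

end Admissible

lemma two_add_sq_le {a x t : ℝ} (ha : 0 ≤ a) (hxa : 2 - 2 * x ≤ a ^ 2) (ht : a ≤ t) :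
    2 + t ^ 2 ≤ 2 * (t ^ 2 + x) := by
  nlinarith [pow_le_pow_left₀ ha ht 2]

lemma admissible_of_le {a x t M : ℝ} (ha : 0 ≤ a) (hxa : 2 - 2 * x ≤ a ^ 2) (hxM : |x| ≤ M)
    (ht : a ≤ t) : Admissible (2 * M + 20) x t := by
  have hD := two_add_sq_le ha hxa ht
  have hM := abs_le.mp hxM
  have hMD : M ≤ M * (t ^ 2 + x) := le_mul_of_one_le_right (by linarith) (by nlinarith)
  refine ⟨by nlinarith, ?_, ?_⟩
  · rw [abs_of_nonneg (ha.trans ht)]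
    nlinarith [sq_nonneg (t - 1)]
  · rw [abs_le]
    constructor <;> linarith [sq_nonneg t]

lemma admissible_of_one_le {y t : ℝ} (hy : 1 ≤ y) (ht : 0 ≤ t) : Admissible 10 y t where
  one_le_denom := by nlinarith
  abs_le_denom := by rw [abs_of_nonneg ht]; nlinarith
  abs_numerator_le := by rw [abs_le]; constructor <;> nlinarith

lemma div_le_two_mul_div {K D t : ℝ} (hK : 0 ≤ K) (hD : 2 + t ^ 2 ≤ 2 * D) :
    K / D ≤ 2 * K / (1 + t ^ 2) := by
  rw [show 2 * K / (1 + t ^ 2) = K / ((1 + t ^ 2) / 2) by field_simp]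
  exact div_le_div_of_nonneg_left hK (by positivity) (by linarith)

def localBound (M t : ℝ) : ℝ := (116 * M + 1200) / (1 + t ^ 2)

lemma integrable_localBound (M : ℝ) : Integrable (localBound M) := by
  convert integrable_inv_one_add_sq.const_mul (116 * M + 1200) using 1
  exact funext fun t => div_eq_mul_inv _ _

lemma integrableOn_Ioi_of_abs_le_localBound {f : ℝ → ℝ} {a M : ℝ} (hf : Measurable f)
    (h : ∀ t ∈ Ioi a, |f t| ≤ localBound M t) : IntegrableOn f (Ioi a) :=
  (integrable_localBound M).integrableOn.mono' hf.aestronglyMeasurable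
    (ae_restrict_of_forall_mem measurableSet_Ioi h)

lemma tendsto_zero_of_abs_le_div {f : ℝ → ℝ} {a x K : ℝ}
    (h : ∀ t ≥ a, |f t| ≤ K / (t ^ 2 + x)) : Tendsto f atTop (𝓝 0) :=
  squeeze_zero_norm' ((eventually_ge_atTop a).mono h)
    (tendsto_const_nhds.div_atTop
      (tendsto_atTop_add_const_right _ x (tendsto_pow_atTop two_ne_zero)))

lemma hasDerivAt_setIntegral {F F' : ℝ → ℝ → ℝ} {s U : Set ℝ} {x₀ : ℝ} {bound : ℝ → ℝ}
    (hs : MeasurableSet s) (hU : U ∈ 𝓝 x₀) (hF : ∀ y, Measurable (F y))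
    (hF' : Measurable (F' x₀))
    (hF_int : IntegrableOn (F x₀) s) (hbound : IntegrableOn bound s)
    (h_le : ∀ y ∈ U, ∀ t ∈ s, |F' y t| ≤ bound t)
    (h_diff : ∀ y ∈ U, ∀ t ∈ s, HasDerivAt (F · t) (F' y t) y) :
    HasDerivAt (fun y => ∫ t in s, F y t) (∫ t in s, F' x₀ t) x₀ :=
  (hasDerivAt_integral_of_dominated_loc_of_deriv_le hU
    (Eventually.of_forall fun y => (hF y).aestronglyMeasurable) hF_int hF'.aestronglyMeasurable
    (ae_restrict_of_forall_mem hs fun t ht y hy => h_le y hy t ht) hbound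
    (ae_restrict_of_forall_mem hs fun t ht y hy => h_diff y hy t ht)).2

@[fun_prop]
lemma continuous_phase (x : ℝ) : Continuous (phase x) := by
  unfold phase; fun_prop

lemma measurable_tail0 (x : ℝ) : Measurable (tail0 x) := by
  unfold tail0 weight0 phase; fun_prop

lemma measurable_tail1 (x : ℝ) : Measurable (tail1 x) := by
  unfold tail1 weight0 weight1 phase; fun_prop

lemma measurable_tail2 (x : ℝ) : Measurable (tail2 x) := by
  unfold tail2 weight0 weight1 weight2 phase; fun_prop

section

variable {a x : ℝ} (ha : 0 ≤ a) (hxa : 2 - 2 * x ≤ a ^ 2)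
include ha hxa

lemma le_localBound {M t : ℝ} (hxM : |x| ≤ M) (ht : a ≤ t) :
    (29 * (2 * M + 20) + 20) / (t ^ 2 + x) ≤ localBound M t := by
  have hM : 0 ≤ M := (abs_nonneg x).trans hxM
  rw [localBound, show 116 * M + 1200 = 2 * (29 * (2 * M + 20) + 20) by ring]
  exact div_le_two_mul_div (by positivity) (two_add_sq_le ha hxa ht)

lemma abs_tail0_le_localBound {M t : ℝ} (hxM : |x| ≤ M) (ht : a ≤ t) :
    |tail0 x t| ≤ localBound M t := by
  have h := admissible_of_le ha hxa hxM ht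
  refine h.abs_tail0_le.trans (le_trans ?_ (le_localBound ha hxa hxM ht))
  exact div_le_div₀ (by linarith [h.nonneg]) (by linarith [h.nonneg]) h.pos
    (by nlinarith [h.one_le_denom])

lemma abs_tail1_le_localBound {M t : ℝ} (hxM : |x| ≤ M) (ht : a ≤ t) :
    |tail1 x t| ≤ localBound M t := by
  have h := admissible_of_le ha hxa hxM ht
  refine h.abs_tail1_le.trans (le_trans ?_ (le_localBound ha hxa hxM ht))
  exact div_le_div₀ (by linarith [h.nonneg]) (by linarith [h.nonneg]) h.pos
    (by nlinarith [h.one_le_denom])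

lemma abs_tail2_le_localBound {M t : ℝ} (hxM : |x| ≤ M) (ht : a ≤ t) :
    |tail2 x t| ≤ localBound M t :=
  (admissible_of_le ha hxa hxM ht).abs_tail2_le.trans (le_localBound ha hxa hxM ht)

lemma integrableOn_tail0 : IntegrableOn (tail0 x) (Ioi a) :=
  integrableOn_Ioi_of_abs_le_localBound (measurable_tail0 x) fun _ ht =>
    abs_tail0_le_localBound ha hxa le_rfl ht.le

lemma integrableOn_tail1 : IntegrableOn (tail1 x) (Ioi a) :=
  integrableOn_Ioi_of_abs_le_localBound (measurable_tail1 x) fun _ ht =>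
    abs_tail1_le_localBound ha hxa le_rfl ht.le

lemma integrableOn_tail2 : IntegrableOn (tail2 x) (Ioi a) :=
  integrableOn_Ioi_of_abs_le_localBound (measurable_tail2 x) fun _ ht =>
    abs_tail2_le_localBound ha hxa le_rfl ht.le

lemma tendsto_boundary0 : Tendsto (boundary0 x) atTop (𝓝 0) :=
  tendsto_zero_of_abs_le_div fun _ ht => (admissible_of_le ha hxa le_rfl ht).abs_boundary0_le

lemma tendsto_defectPrimitive : Tendsto (defectPrimitive x) atTop (𝓝 0) :=
  tendsto_zero_of_abs_le_div fun _ ht => (admissible_of_le ha hxa le_rfl ht).abs_defectPrimitive_le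

lemma integral_cos_phase_eq {R : ℝ} (hR : a ≤ R) :
    ∫ t in (0 : ℝ)..R, Real.cos (phase x t) = (∫ t in Ioc 0 a, Real.cos (phase x t))
      + (boundary0 x R - boundary0 x a + ∫ t in a..R, tail0 x t) := by
  have hcos : ∀ b c : ℝ, IntervalIntegrable (fun t => Real.cos (phase x t)) volume b c :=
    fun b c => (by fun_prop : Continuous _).intervalIntegrable b c
  have htail : IntervalIntegrable (tail0 x) volume a R :=
    (intervalIntegrable_iff_integrableOn_Ioc_of_le hR).mpr
      ((integrableOn_tail0 ha hxa).mono_set Ioc_subset_Ioi_self)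
  have hftc : ∫ t in a..R, (Real.cos (phase x t) - tail0 x t) = boundary0 x R - boundary0 x a :=
    intervalIntegral.integral_eq_sub_of_hasDerivAt (fun t ht => hasDerivAt_boundary0_t
      (admissible_of_le ha hxa le_rfl (uIcc_of_le hR ▸ ht).1).pos.ne') ((hcos a R).sub htail)
  rw [← intervalIntegral.integral_add_adjacent_intervals (hcos 0 a) (hcos a R),
    intervalIntegral.integral_of_le ha, ← hftc, intervalIntegral.integral_sub (hcos a R) htail]
  ring

lemma tendsto_integral_cos_phase :
    Tendsto (fun R => ∫ t in (0 : ℝ)..R, Real.cos (phase x t)) atTop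
      (𝓝 (regIntegral0 a x)) := by
  have h := tendsto_const_nhds (x := ∫ t in Ioc 0 a, Real.cos (phase x t)) |>.add
    (((tendsto_boundary0 ha hxa).sub_const (boundary0 x a)).add
      (intervalIntegral_tendsto_integral_Ioi a (integrableOn_tail0 ha hxa) tendsto_id))
  convert h.congr' ((eventually_ge_atTop a).mono fun R hR => (integral_cos_phase_eq ha hxa hR).symm)
    using 2
  rw [regIntegral0]
  ring

lemma integral_tail2_sub_mul_integral_tail0 :
    (∫ t in Ioi a, tail2 x t) - x * ∫ t in Ioi a, tail0 x t = -defectPrimitive x a := by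
  have hpos : ∀ t, a ≤ t → t ^ 2 + x ≠ 0 := fun t ht =>
    (admissible_of_le ha hxa le_rfl ht).pos.ne'
  rw [← integral_const_mul, ← integral_sub (integrableOn_tail2 ha hxa)
    ((integrableOn_tail0 ha hxa).const_mul x), ← zero_sub]
  exact integral_Ioi_of_hasDerivAt_of_tendsto
    (hasDerivAt_defectPrimitive_t (hpos a le_rfl)).continuousAt.continuousWithinAt
    (fun t ht => hasDerivAt_defectPrimitive_t (hpos t ht.le))
    ((integrableOn_tail2 ha hxa).sub ((integrableOn_tail0 ha hxa).const_mul x))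
    (tendsto_defectPrimitive ha hxa)

end

lemma integral_sq_mul_cos_phase (a x : ℝ) (ha : 0 ≤ a) :
    ∫ t in Ioc 0 a, -(t ^ 2 * Real.cos (phase x t))
      = x * (∫ t in Ioc 0 a, Real.cos (phase x t)) - Real.sin (phase x a) := by
  have hftc : ∫ t in (0 : ℝ)..a, (t ^ 2 + x) * Real.cos (phase x t) = Real.sin (phase x a) := by
    rw [intervalIntegral.integral_eq_sub_of_hasDerivAt
      (fun t _ => ((hasDerivAt_phase_t x t).sin).congr_deriv (mul_comm _ _))
      ((by fun_prop : Continuous _).intervalIntegrable _ _)]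
    simp [phase]
  rw [← intervalIntegral.integral_of_le ha, ← intervalIntegral.integral_of_le ha, ← hftc,
    ← intervalIntegral.integral_const_mul, ← intervalIntegral.integral_sub]
  · congr 1; ext t; ring
  all_goals exact (by fun_prop : Continuous _).intervalIntegrable _ _

lemma regIntegral2_eq {a x : ℝ} (ha : 0 ≤ a) (hxa : 2 - 2 * x ≤ a ^ 2) :
    regIntegral2 a x = x * regIntegral0 a x := by
  have hbd := boundary2_sub_mul_boundary0 (admissible_of_le ha hxa le_rfl le_rfl).pos.ne'
  have htail := integral_tail2_sub_mul_integral_tail0 ha hxa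
  rw [regIntegral2, regIntegral0, integral_sq_mul_cos_phase a x ha]
  linear_combination htail - hbd

lemma hasDerivAt_integral_cos_phase (a x : ℝ) :
    HasDerivAt (fun y => ∫ t in Ioc 0 a, Real.cos (phase y t))
      (∫ t in Ioc 0 a, -(t * Real.sin (phase x t))) x := by
  refine hasDerivAt_setIntegral (F := fun y t => Real.cos (phase y t))
    (F' := fun y t => -(t * Real.sin (phase y t))) (bound := fun _ => a) measurableSet_Ioc univ_mem
    (fun y => by fun_prop) (by fun_prop) (by fun_prop : Continuous _).integrableOn_Ioc
    (integrableOn_const measure_Ioc_lt_top.ne) (fun y _ t ht => ?_) fun y _ t _ => ?_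
  · rw [abs_neg, abs_mul, abs_of_pos ht.1]
    exact (mul_le_mul ht.2 (Real.abs_sin_le_one _) (abs_nonneg _)
      (ht.1.le.trans ht.2)).trans_eq (mul_one a)
  · exact (hasDerivAt_phase_x y t).cos.congr_deriv (by ring)

lemma hasDerivAt_integral_mul_sin_phase (a x : ℝ) :
    HasDerivAt (fun y => ∫ t in Ioc 0 a, -(t * Real.sin (phase y t)))
      (∫ t in Ioc 0 a, -(t ^ 2 * Real.cos (phase x t))) x := by
  refine hasDerivAt_setIntegral (F := fun y t => -(t * Real.sin (phase y t)))
    (F' := fun y t => -(t ^ 2 * Real.cos (phase y t))) (bound := fun _ => a ^ 2)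
    measurableSet_Ioc univ_mem (fun y => by fun_prop) (by fun_prop) (by fun_prop : Continuous _).integrableOn_Ioc
    (integrableOn_const measure_Ioc_lt_top.ne) (fun y _ t ht => ?_) fun y _ t _ => ?_
  · rw [abs_neg, abs_mul, abs_of_pos (pow_pos ht.1 2)]
    exact (mul_le_mul (pow_le_pow_left₀ ht.1.le ht.2 2) (Real.abs_cos_le_one _) (abs_nonneg _)
      (sq_nonneg a)).trans_eq (mul_one _)
  · exact ((hasDerivAt_phase_x y t).sin.const_mul t).neg.congr_deriv (by ring)

lemma eventually_local {a x : ℝ} (hx : 2 - 2 * x < a ^ 2) :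
    ∀ᶠ y in 𝓝 x, 2 - 2 * y < a ^ 2 ∧ |y| < |x| + 1 :=
  (ContinuousAt.eventually_lt (f := fun y => 2 - 2 * y) (by fun_prop) continuousAt_const hx).and
    (ContinuousAt.eventually_lt (f := fun y => |y|) (by fun_prop) continuousAt_const
      (lt_add_one |x|))

lemma hasDerivAt_integral_tail0 {a x : ℝ} (ha : 0 ≤ a) (hx : 2 - 2 * x < a ^ 2) :
    HasDerivAt (fun y => ∫ t in Ioi a, tail0 y t) (∫ t in Ioi a, tail1 x t) x :=
  hasDerivAt_setIntegral measurableSet_Ioi (eventually_local hx) measurable_tail0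
    (measurable_tail1 x) (integrableOn_tail0 ha hx.le)
    (integrable_localBound (|x| + 1)).integrableOn
    (fun _ hy _ ht => abs_tail1_le_localBound ha hy.1.le hy.2.le ht.le)
    fun _ hy _ ht => hasDerivAt_tail0_x (admissible_of_le ha hy.1.le le_rfl ht.le).pos.ne'

lemma hasDerivAt_integral_tail1 {a x : ℝ} (ha : 0 ≤ a) (hx : 2 - 2 * x < a ^ 2) :
    HasDerivAt (fun y => ∫ t in Ioi a, tail1 y t) (∫ t in Ioi a, tail2 x t) x :=
  hasDerivAt_setIntegral measurableSet_Ioi (eventually_local hx) measurable_tail1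
    (measurable_tail2 x) (integrableOn_tail1 ha hx.le)
    (integrable_localBound (|x| + 1)).integrableOn
    (fun _ hy _ ht => abs_tail2_le_localBound ha hy.1.le hy.2.le ht.le)
    fun _ hy _ ht => hasDerivAt_tail1_x (admissible_of_le ha hy.1.le le_rfl ht.le).pos.ne'

lemma hasDerivAt_regIntegral0 {a x : ℝ} (ha : 0 ≤ a) (hx : 2 - 2 * x < a ^ 2) :
    HasDerivAt (regIntegral0 a) (regIntegral1 a x) x :=
  ((hasDerivAt_integral_cos_phase a x).sub
    (hasDerivAt_boundary0_x (admissible_of_le ha hx.le le_rfl le_rfl).pos.ne')).add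
    (hasDerivAt_integral_tail0 ha hx)

lemma hasDerivAt_regIntegral1 {a x : ℝ} (ha : 0 ≤ a) (hx : 2 - 2 * x < a ^ 2) :
    HasDerivAt (regIntegral1 a) (regIntegral2 a x) x :=
  ((hasDerivAt_integral_mul_sin_phase a x).sub
    (hasDerivAt_boundary1_x (admissible_of_le ha hx.le le_rfl le_rfl).pos.ne')).add
    (hasDerivAt_integral_tail1 ha hx)

lemma regIntegral0_zero (y : ℝ) : regIntegral0 0 y = ∫ t in Ioi 0, tail0 y t := by
  simp [regIntegral0, boundary0, phase]

lemma regIntegral1_zero (y : ℝ) : regIntegral1 0 y = ∫ t in Ioi 0, tail1 y t := by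
  simp [regIntegral1, boundary1, phase]

lemma div_sq_le_div_div {K y t : ℝ} (hK : 0 ≤ K) (hy : 1 ≤ y) :
    K / (t ^ 2 + y) ^ 2 ≤ K / y / (1 + t ^ 2) := by
  rw [div_div]
  exact div_le_div_of_nonneg_left hK (by positivity) (by nlinarith)

lemma abs_tail0_le_of_one_le {y t : ℝ} (hy : 1 ≤ y) (ht : 0 ≤ t) :
    |tail0 y t| ≤ 52 / y / (1 + t ^ 2) :=
  (admissible_of_one_le hy ht).abs_tail0_le.trans
    ((div_le_div_of_nonneg_right (by norm_num) (by positivity)).trans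
      (div_sq_le_div_div (by norm_num) hy))

lemma abs_tail1_le_of_one_le {y t : ℝ} (hy : 1 ≤ y) (ht : 0 ≤ t) :
    |tail1 y t| ≤ 52 / y / (1 + t ^ 2) :=
  (admissible_of_one_le hy ht).abs_tail1_le.trans
    ((div_sq_le_div_div (by norm_num) hy).trans_eq (by norm_num))

lemma abs_integral_Ioi_zero_le {f : ℝ → ℝ} {K : ℝ}
    (h : ∀ t ∈ Ioi (0 : ℝ), |f t| ≤ K / (1 + t ^ 2)) :
    |∫ t in Ioi 0, f t| ≤ K * (Real.pi / 2) := by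
  have := norm_integral_le_of_norm_le (f := f) (integrable_inv_one_add_sq.const_mul K).integrableOn
    (ae_restrict_of_forall_mem measurableSet_Ioi fun t ht => (h t ht).trans_eq (div_eq_mul_inv _ _))
  rwa [integral_const_mul, integral_Ioi_inv_one_add_sq, Real.arctan_zero, sub_zero] at this

def energy (f f' : ℝ → ℝ) (v : ℝ) : ℝ := f' v ^ 2 - v * f v ^ 2

lemma hasDerivAt_energy {f f' : ℝ → ℝ} {v : ℝ} (hf : HasDerivAt f (f' v) v)
    (hf' : HasDerivAt f' (v * f v) v) : HasDerivAt (energy f f') (-(f v ^ 2)) v := by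
  refine ((hf'.fun_pow 2).fun_sub ((hasDerivAt_id v).fun_mul (hf.fun_pow 2))).congr_deriv ?_
  simp only [id]
  ring

lemma tendsto_energy {f f' : ℝ → ℝ} {C : ℝ} (hf : ∀ v > 1, |f v| ≤ C / v)
    (hf' : ∀ v > 1, |f' v| ≤ C / v) : Tendsto (energy f f') atTop (𝓝 0) := by
  refine squeeze_zero_norm' ((eventually_gt_atTop 1).mono fun v hv => ?_)
    (tendsto_const_nhds (x := 2 * C ^ 2).div_atTop tendsto_id)
  have hv0 : 0 < v := one_pos.trans hv
  have h1 : f v ^ 2 ≤ (C / v) ^ 2 := by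
    rw [← sq_abs]; exact pow_le_pow_left₀ (abs_nonneg _) (hf v hv) 2
  have h2 : f' v ^ 2 ≤ (C / v) ^ 2 := by
    rw [← sq_abs]; exact pow_le_pow_left₀ (abs_nonneg _) (hf' v hv) 2
  calc ‖energy f f' v‖ ≤ f' v ^ 2 + v * f v ^ 2 := by
        rw [Real.norm_eq_abs, energy]
        exact (abs_sub _ _).trans_eq
          (by rw [abs_of_nonneg (sq_nonneg _), abs_of_nonneg (by positivity)])
    _ ≤ (C / v) ^ 2 + v * (C / v) ^ 2 := by gcongr
    _ = C ^ 2 / v ^ 2 + C ^ 2 / v := by field_simp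
    _ ≤ C ^ 2 / v + C ^ 2 / v := by
        gcongr; nlinarith
    _ = 2 * C ^ 2 / id v := by rw [id]; ring

theorem integral_Ioi_sq_eq_energy {f f' : ℝ → ℝ} (hf : ∀ v, HasDerivAt f (f' v) v)
    (hf' : ∀ v, HasDerivAt f' (v * f v) v) (hE : Tendsto (energy f f') atTop (𝓝 0))
    (x s : ℝ) :
    IntegrableOn (fun u => f (x + u) ^ 2) (Ioi s) ∧
      ∫ u in Ioi s, f (x + u) ^ 2 = energy f f' (x + s) := by
  have hderiv : ∀ u, HasDerivAt (fun u => energy f f' (x + u)) (-(f (x + u) ^ 2)) u :=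
    fun u => (hasDerivAt_energy (hf (x + u)) (hf' (x + u))).comp_const_add x u
  have hcont := (hderiv s).continuousAt.continuousWithinAt (s := Ici s)
  have hnonpos : ∀ u ∈ Ioi s, -(f (x + u) ^ 2) ≤ 0 := fun u _ => neg_nonpos.mpr (sq_nonneg _)
  have hlim := hE.comp (tendsto_atTop_add_const_left _ x tendsto_id)
  refine ⟨by simpa using
    (integrableOn_Ioi_deriv_of_nonpos hcont (fun u _ => hderiv u) hnonpos hlim).neg, ?_⟩
  have h := integral_Ioi_of_hasDerivAt_of_nonpos hcont (fun u _ => hderiv u) hnonpos hlim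
  rwa [integral_neg, zero_sub, neg_inj] at h

lemma two_sub_two_mul_lt_sq (x : ℝ) : 2 - 2 * x < (|x| + 2) ^ 2 := by
  nlinarith [abs_nonneg x, neg_abs_le x]

section Ai

variable {Ai : ℝ → ℝ} (hAi : ∀ x : ℝ,
    Tendsto (fun R : ℝ => ∫ t in (0 : ℝ)..R, Real.cos (t ^ 3 / 3 + x * t)) atTop
      (𝓝 (Real.pi * Ai x)))
include hAi

lemma pi_mul_Ai_eq {a x : ℝ} (ha : 0 ≤ a) (hxa : 2 - 2 * x ≤ a ^ 2) :
    Real.pi * Ai x = regIntegral0 a x :=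
  tendsto_nhds_unique (hAi x) (tendsto_integral_cos_phase ha hxa)

lemma hasDerivAt_Ai {a x : ℝ} (ha : 0 ≤ a) (hx : 2 - 2 * x < a ^ 2) :
    HasDerivAt Ai (regIntegral1 a x / Real.pi) x :=
  ((hasDerivAt_regIntegral0 ha hx).div_const Real.pi).congr_of_eventuallyEq
    ((eventually_local hx).mono fun y hy => by
      show Ai y = regIntegral0 a y / Real.pi
      rw [← pi_mul_Ai_eq hAi ha hy.1.le, mul_div_cancel_left₀ _ Real.pi_ne_zero])

lemma hasDerivAt_Ai_deriv (x : ℝ) : HasDerivAt Ai (deriv Ai x) x :=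
  (hasDerivAt_Ai hAi (by positivity) (two_sub_two_mul_lt_sq x)).differentiableAt.hasDerivAt

lemma hasDerivAt_deriv_Ai (x : ℝ) : HasDerivAt (deriv Ai) (x * Ai x) x := by
  have ha : 0 ≤ |x| + 2 := by positivity
  have hx := two_sub_two_mul_lt_sq x
  have h := ((hasDerivAt_regIntegral1 ha hx).div_const Real.pi).congr_of_eventuallyEq
    ((eventually_local hx).mono fun y hy => (hasDerivAt_Ai hAi ha hy.1).deriv)
  rwa [regIntegral2_eq ha hx.le, ← pi_mul_Ai_eq hAi ha hx.le, mul_left_comm,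
    mul_div_cancel_left₀ _ Real.pi_ne_zero] at h

lemma abs_Ai_le {y : ℝ} (hy : 1 < y) : |Ai y| ≤ 26 / y := by
  have h := abs_integral_Ioi_zero_le fun t ht => abs_tail0_le_of_one_le hy.le (le_of_lt ht)
  rw [← regIntegral0_zero, ← pi_mul_Ai_eq hAi le_rfl (by linarith), abs_mul,
    abs_of_pos Real.pi_pos] at h
  exact le_of_mul_le_mul_left (h.trans_eq (by ring)) Real.pi_pos

lemma abs_deriv_Ai_le {y : ℝ} (hy : 1 < y) : |deriv Ai y| ≤ 26 / y := by
  have h := abs_integral_Ioi_zero_le fun t ht => abs_tail1_le_of_one_le hy.le (le_of_lt ht)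
  rw [← regIntegral1_zero, ← mul_div_cancel_left₀ (regIntegral1 0 y) Real.pi_ne_zero,
    mul_div_assoc, ← (hasDerivAt_Ai hAi le_rfl (by linarith)).deriv, abs_mul,
    abs_of_pos Real.pi_pos] at h
  exact le_of_mul_le_mul_left (h.trans_eq (by ring)) Real.pi_pos

end Ai

end Airy

end

/-- For all real `x` and `s`, the integral `∫_s^∞ Ai(x+u)² du`
converges and equals `(Ai'(x+s))² − (x+s)·Ai(x+s)²`.
Here `Ai` is the Airy function, characterized by
`π·Ai(x) = lim_{R→∞} ∫₀^R cos(t³/3 + x·t) dt`, and `Ai' = deriv Ai`. -/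
theorem stmt_1 (Ai : ℝ → ℝ)
    (hAi : ∀ x : ℝ,
      Tendsto (fun R : ℝ => ∫ t in (0:ℝ)..R, Real.cos (t ^ 3 / 3 + x * t))
        atTop (nhds (Real.pi * Ai x)))
    (x s : ℝ) :
    IntegrableOn (fun u => Ai (x + u) ^ 2) (Set.Ioi s) ∧
    ∫ u in Set.Ioi s, Ai (x + u) ^ 2 =
      (deriv Ai (x + s)) ^ 2 - (x + s) * Ai (x + s) ^ 2 :=
  Airy.integral_Ioi_sq_eq_energy (Airy.hasDerivAt_Ai_deriv hAi) (Airy.hasDerivAt_deriv_Ai hAi)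
    (Airy.tendsto_energy (fun _ => Airy.abs_Ai_le hAi) (fun _ => Airy.abs_deriv_Ai_le hAi)) x s
end

section
/- The kernel K_σ is Hermitian positive semidefinite: for every n ∈ ℕ, every x : Fin n → ℝ and every z : Fin n → ℂ, the complex number Σ_{i,j} z(i)·conj(z(j))·K_σ(x(i), x(j)) has imaginary part equal to 0 and real part ≥ 0. -/
open MeasureTheory Filter

/-- The Amir–Corwin–Quastel double-integral Airy kernel
`K_σ(x,y) = ∫_ℝ (∫₀^∞ Ai(x+t+u)·Ai(y+t+u) du) dσ(t)`. -/
noncomputable def Ksig (Ai : ℝ → ℝ) (σ : Measure ℝ) (x y : ℝ) : ℝ :=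
  ∫ t, (∫ u in Set.Ioi (0 : ℝ), Ai (x + t + u) * Ai (y + t + u)) ∂σ

/-!
For fixed `t` the Hermitian form is an integral of squares:
`Σ zᵢ z̄ⱼ ∫₀^∞ Ai(xᵢ+t+u) Ai(xⱼ+t+u) du = ∫₀^∞ |Σ zᵢ Ai(xᵢ+t+u)|² du`.
Integrating in `t` against `σ` preserves this, provided the finite sums may be exchanged with
the `σ`-integral, i.e. each `t ↦ ∫₀^∞ Ai(a+t+u) Ai(b+t+u) du` is `σ`-integrable. By the moment
assumption it suffices that this function grows polynomially in `t`, which follows from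
`|Ai x| ≤ |x| + 4`. That bound is read off the defining oscillatory integral: beyond `|x| + 1`
the phase `t³/3 + x t` is convex with derivative `≥ 1`, so one integration by parts
(van der Corput's lemma) bounds the tail of the integral by `3`.
-/

open Set Real

theorem setIntegral_Ioi_zero_comp_add {E : Type*} [NormedAddCommGroup E] [NormedSpace ℝ E]
    (f : ℝ → E) (c : ℝ) :
    ∫ u in Ioi 0, f (c + u) = ∫ v in Ioi c, f v := by
  have := (measurePreserving_add_left volume c).setIntegral_preimage_emb
    (measurableEmbedding_addLeft c) f (Ioi c)
  rwa [preimage_const_add_Ioi, sub_self] at this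

theorem integrableOn_Ioi_zero_comp_add_iff {E : Type*} [NormedAddCommGroup E]
    {f : ℝ → E} {c : ℝ} :
    IntegrableOn (fun u => f (c + u)) (Ioi 0) ↔ IntegrableOn f (Ioi c) := by
  have := (measurePreserving_add_left volume c).integrableOn_comp_preimage
    (measurableEmbedding_addLeft c) (f := f) (s := Ioi c)
  rwa [preimage_const_add_Ioi, sub_self] at this

theorem continuous_setIntegral_Ioi {E : Type*} [NormedAddCommGroup E] [NormedSpace ℝ E]
    {f : ℝ → E} (hf : ∀ c, IntegrableOn f (Ioi c)) :
    Continuous fun t => ∫ v in Ioi t, f v := by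
  have hint : ∀ a b, IntervalIntegrable f volume a b := fun a b =>
    intervalIntegrable_iff.2 ((hf (min a b)).mono_set Ioc_subset_Ioi_self)
  have : (fun t => ∫ v in Ioi t, f v) = fun t => (∫ v in Ioi 0, f v) - ∫ v in (0 : ℝ)..t, f v := by
    funext t
    rw [← intervalIntegral.integral_Ioi_sub_Ioi' (hf 0) (hf t)]
    abel
  rw [this]
  exact continuous_const.sub (intervalIntegral.continuous_primitive hint 0)

theorem abs_intervalIntegral_deriv_mul_le {u u' g : ℝ → ℝ} {a b : ℝ} (hab : a ≤ b)
    (hu : ∀ t ∈ uIcc a b, HasDerivAt u (u' t) t) (hu' : IntervalIntegrable u' volume a b)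
    (hu'_nonpos : ∀ t ∈ Icc a b, u' t ≤ 0) (hg : ∀ t, |g t| ≤ 1) :
    |∫ t in a..b, u' t * g t| ≤ u a - u b := by
  have hle := intervalIntegral.norm_integral_le_of_norm_le hab (f := fun t => u' t * g t)
    (g := fun t => -u' t) (Eventually.of_forall fun t ht => ?_) hu'.neg
  · rwa [Real.norm_eq_abs, intervalIntegral.integral_neg,
      intervalIntegral.integral_eq_sub_of_hasDerivAt hu hu', neg_sub] at hle
  · rw [Real.norm_eq_abs, abs_mul, abs_of_nonpos (hu'_nonpos t (Ioc_subset_Icc_self ht))]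
    exact mul_le_of_le_one_right (neg_nonneg.2 (hu'_nonpos t (Ioc_subset_Icc_self ht))) (hg t)

theorem abs_intervalIntegral_cos_le_of_deriv {φ φ' φ'' : ℝ → ℝ} {a b lam : ℝ} (hab : a ≤ b)
    (hlam : 0 < lam) (hφ : ∀ t ∈ Icc a b, HasDerivAt φ (φ' t) t)
    (hφ' : ∀ t ∈ Icc a b, HasDerivAt φ' (φ'' t) t) (hφ''_cont : ContinuousOn φ'' (Icc a b))
    (hlam_le : ∀ t ∈ Icc a b, lam ≤ φ' t) (hφ''_nonneg : ∀ t ∈ Icc a b, 0 ≤ φ'' t) :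
    |∫ t in a..b, cos (φ t)| ≤ 3 / lam := by
  have hpos : ∀ t ∈ Icc a b, 0 < φ' t := fun t ht => hlam.trans_le (hlam_le t ht)
  have hφ_cont : ContinuousOn φ (Icc a b) := fun t ht => (hφ t ht).continuousAt.continuousWithinAt
  have hφ'_cont : ContinuousOn φ' (Icc a b) :=
    fun t ht => (hφ' t ht).continuousAt.continuousWithinAt
  -- integrate by parts `cos φ = (φ')⁻¹ · (sin ∘ φ)'`
  have hu : ∀ t ∈ uIcc a b, HasDerivAt (fun s => (φ' s)⁻¹) (-φ'' t / φ' t ^ 2) t :=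
    fun t ht => (hφ' t (uIcc_of_le hab ▸ ht)).inv (hpos t (uIcc_of_le hab ▸ ht)).ne'
  have hv : ∀ t ∈ uIcc a b, HasDerivAt (fun s => sin (φ s)) (cos (φ t) * φ' t) t :=
    fun t ht => (hφ t (uIcc_of_le hab ▸ ht)).sin
  have hu'_int : IntervalIntegrable (fun t => -φ'' t / φ' t ^ 2) volume a b :=
    (hφ''_cont.neg.div (hφ'_cont.pow 2) fun t ht => pow_ne_zero 2 (hpos t ht).ne')
      |>.intervalIntegrable_of_Icc hab
  have hv'_int : IntervalIntegrable (fun t => cos (φ t) * φ' t) volume a b :=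
    ((continuous_cos.comp_continuousOn hφ_cont).mul hφ'_cont).intervalIntegrable_of_Icc hab
  have hibp := intervalIntegral.integral_mul_deriv_eq_deriv_mul hu hv hu'_int hv'_int
  have hcos : ∫ t in a..b, cos (φ t) = ∫ t in a..b, (φ' t)⁻¹ * (cos (φ t) * φ' t) := by
    refine intervalIntegral.integral_congr fun t ht => ?_
    rw [uIcc_of_le hab] at ht
    field_simp [(hpos t ht).ne']
  have hboundary : ∀ t ∈ Icc a b, |(φ' t)⁻¹ * sin (φ t)| ≤ 1 / lam := by
    intro t ht
    rw [abs_mul, abs_of_pos (inv_pos.2 (hpos t ht)), one_div]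
    exact (mul_le_of_le_one_right (inv_pos.2 (hpos t ht)).le (abs_sin_le_one _)).trans
      (inv_anti₀ hlam (hlam_le t ht))
  have hrem : |∫ t in a..b, -φ'' t / φ' t ^ 2 * sin (φ t)| ≤ 1 / lam := by
    refine (abs_intervalIntegral_deriv_mul_le hab hu hu'_int (fun t ht => ?_)
      fun t => abs_sin_le_one _).trans ?_
    · exact div_nonpos_of_nonpos_of_nonneg (neg_nonpos.2 (hφ''_nonneg t ht)) (sq_nonneg _)
    · have ha := inv_anti₀ hlam (hlam_le a (left_mem_Icc.2 hab))
      have hb := inv_pos.2 (hpos b (right_mem_Icc.2 hab))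
      rw [one_div]
      linarith
  rw [hcos, hibp]
  have h1 := hboundary a (left_mem_Icc.2 hab)
  have h2 := hboundary b (right_mem_Icc.2 hab)
  calc _ ≤ |(φ' b)⁻¹ * sin (φ b)| + |(φ' a)⁻¹ * sin (φ a)|
        + |∫ t in a..b, -φ'' t / φ' t ^ 2 * sin (φ t)| :=
          (abs_sub _ _).trans (by gcongr; exact abs_sub _ _)
    _ ≤ 1 / lam + 1 / lam + 1 / lam := by linarith
    _ = 3 / lam := by ring

theorem abs_intervalIntegral_cos_cubic_le (x : ℝ) {R : ℝ} (hR : |x| + 1 ≤ R) :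
    |∫ t in (0 : ℝ)..R, cos (t ^ 3 / 3 + x * t)| ≤ |x| + 4 := by
  set T := |x| + 1 with hT_def
  have hT : 1 ≤ T := by simp [hT_def]
  have hcont : Continuous fun t : ℝ => cos (t ^ 3 / 3 + x * t) := by fun_prop
  have hhead : |∫ t in (0 : ℝ)..T, cos (t ^ 3 / 3 + x * t)| ≤ T := by
    simpa [abs_of_nonneg (zero_le_one.trans hT)] using
      intervalIntegral.norm_integral_le_of_norm_le_const (C := 1) (a := 0) (b := T)
        (f := fun t => cos (t ^ 3 / 3 + x * t)) fun t _ => abs_cos_le_one _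
  have htail : |∫ t in T..R, cos (t ^ 3 / 3 + x * t)| ≤ 3 / 1 := by
    refine abs_intervalIntegral_cos_le_of_deriv (φ' := fun t => t ^ 2 + x)
      (φ'' := fun t => 2 * t) hR one_pos (fun t _ => ?_) (fun t _ => ?_) (by fun_prop)
      (fun t ht => ?_) (fun t ht => ?_)
    · exact (((hasDerivAt_pow 3 t).div_const 3).add ((hasDerivAt_id' t).const_mul x)).congr_deriv
        (by norm_num)
    · exact ((hasDerivAt_pow 2 t).add_const x).congr_deriv (by norm_num)
    · nlinarith [neg_abs_le x, ht.1]
    · linarith [ht.1]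
  rw [← intervalIntegral.integral_add_adjacent_intervals (hcont.intervalIntegrable 0 T)
    (hcont.intervalIntegrable T R)]
  calc _ ≤ |∫ t in (0 : ℝ)..T, cos (t ^ 3 / 3 + x * t)| + |∫ t in T..R, cos (t ^ 3 / 3 + x * t)| :=
        abs_add_le _ _
    _ ≤ |x| + 4 := by linarith

theorem abs_le_of_tendsto_integral_cos_cubic {x A : ℝ}
    (hA : Tendsto (fun R : ℝ => ∫ t in (0 : ℝ)..R, cos (t ^ 3 / 3 + x * t)) atTop (nhds (π * A))) :
    |A| ≤ |x| + 4 := by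
  have hπA : |π * A| ≤ |x| + 4 := le_of_tendsto hA.abs
    (eventually_atTop.2 ⟨|x| + 1, fun R hR => abs_intervalIntegral_cos_cubic_le x hR⟩)
  rw [abs_mul, abs_of_pos pi_pos] at hπA
  exact (le_mul_of_one_le_left (abs_nonneg A) (by linarith [pi_gt_three])).trans hπA

theorem integrable_abs_add_pow {α : Type*} [MeasurableSpace α] {μ : Measure α} {f : α → ℝ}
    (hmom : ∀ k : ℕ, Integrable (fun a => |f a| ^ k) μ) (C : ℝ) (k : ℕ) :
    Integrable (fun a => (|f a| + C) ^ k) μ := by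
  simp_rw [add_pow]
  exact integrable_finsetSum _ fun m _ => ((hmom m).mul_const _).mul_const _

theorem integrable_setIntegral_Ioi {σ : Measure ℝ} (hmom : ∀ k : ℕ, Integrable (fun t => |t| ^ k) σ)
    {h : ℝ → ℝ} (hh : ∀ c, IntegrableOn h (Ioi c)) {C : ℝ} (hC : 0 ≤ C) {k : ℕ}
    (hbound : ∀ v, |h v| ≤ (|v| + C) ^ k) :
    Integrable (fun t => ∫ v in Ioi t, h v) σ := by
  refine Integrable.mono'
    (((hmom 0).const_mul |∫ v in Ioi 0, h v|).add (integrable_abs_add_pow hmom C (k + 1)))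
    (continuous_setIntegral_Ioi hh).aestronglyMeasurable (Eventually.of_forall fun t => ?_)
  have hprimitive : |∫ v in (0 : ℝ)..t, h v| ≤ (|t| + C) ^ k * |t| := by
    have hv_le : ∀ v ∈ uIoc 0 t, |v| ≤ |t| := fun v hv => by
      simpa using abs_sub_left_of_mem_uIcc (uIoc_subset_uIcc hv)
    have := intervalIntegral.norm_integral_le_of_norm_le_const (f := h) (C := (|t| + C) ^ k)
      fun v hv => (hbound v).trans
        (pow_le_pow_left₀ (add_nonneg (abs_nonneg v) hC) (by linarith [hv_le v hv]) k)
    rwa [Real.norm_eq_abs, sub_zero] at this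
  rw [← intervalIntegral.integral_Ioi_sub_Ioi' (hh 0) (hh t)] at hprimitive
  have hmono : (|t| + C) ^ k * |t| ≤ (|t| + C) ^ (k + 1) := by
    rw [pow_succ]; gcongr; linarith
  simp only [Pi.add_apply, Real.norm_eq_abs, pow_zero, mul_one]
  have := abs_sub_abs_le_abs_sub (∫ v in Ioi t, h v) (∫ v in Ioi 0, h v)
  rw [abs_sub_comm] at hprimitive
  linarith

theorem integrable_integral_Ioi_airy_mul_airy {Ai : ℝ → ℝ}
    (hAi : ∀ x : ℝ,
      Tendsto (fun R : ℝ => ∫ t in (0 : ℝ)..R, cos (t ^ 3 / 3 + x * t)) atTop (nhds (π * Ai x)))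
    {σ : Measure ℝ} (hmom : ∀ k : ℕ, Integrable (fun t => |t| ^ k) σ) {a b : ℝ}
    (hinner : ∀ t, IntegrableOn (fun u => Ai (a + t + u) * Ai (b + t + u)) (Ioi 0)) :
    Integrable (fun t => ∫ u in Ioi 0, Ai (a + t + u) * Ai (b + t + u)) σ := by
  have hh : ∀ c, IntegrableOn (fun v => Ai (a + v) * Ai (b + v)) (Ioi c) := fun c =>
    integrableOn_Ioi_zero_comp_add_iff.1 (by simpa only [add_assoc] using hinner c)
  have hbound : ∀ v, |Ai (a + v) * Ai (b + v)| ≤ (|v| + (|a| + |b| + 4)) ^ 2 := by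
    intro v
    have ha := abs_le_of_tendsto_integral_cos_cubic (hAi (a + v))
    have hb := abs_le_of_tendsto_integral_cos_cubic (hAi (b + v))
    rw [abs_mul, sq]
    exact mul_le_mul (by linarith [abs_nonneg b, abs_add_le a v])
      (by linarith [abs_nonneg a, abs_add_le b v])
      (abs_nonneg _) (by positivity)
  refine (integrable_setIntegral_Ioi hmom hh (by positivity) hbound).congr
    (Eventually.of_forall fun t => ?_)
  simp only [← setIntegral_Ioi_zero_comp_add _ t, add_assoc]

theorem sum_sum_mul_conj_integral {ι α : Type*} [Fintype ι] [MeasurableSpace α] {μ : Measure α}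
    {f : ι → ι → α → ℝ} (hf : ∀ i j, Integrable (f i j) μ) (z : ι → ℂ) :
    ∑ i, ∑ j, z i * starRingEnd ℂ (z j) * ((∫ a, f i j a ∂μ : ℝ) : ℂ) =
      ∫ a, ∑ i, ∑ j, z i * starRingEnd ℂ (z j) * (f i j a : ℂ) ∂μ := by
  rw [integral_finsetSum _ fun i _ => integrable_finsetSum _ fun j _ => (hf i j).ofReal.const_mul _]
  refine Finset.sum_congr rfl fun i _ => ?_
  rw [integral_finsetSum _ fun j _ => (hf i j).ofReal.const_mul _]
  refine Finset.sum_congr rfl fun j _ => ?_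
  rw [integral_const_mul, integral_complex_ofReal]

theorem sum_sum_mul_conj_ofReal_mul {ι : Type*} [Fintype ι] (z : ι → ℂ) (w : ι → ℝ) :
    ∑ i, ∑ j, z i * starRingEnd ℂ (z j) * ((w i * w j : ℝ) : ℂ) =
      (Complex.normSq (∑ i, z i * w i) : ℂ) := by
  rw [← Complex.mul_conj, map_sum, Finset.sum_mul_sum]
  refine Finset.sum_congr rfl fun i _ => Finset.sum_congr rfl fun j _ => ?_
  rw [map_mul, Complex.conj_ofReal]
  push_cast
  ring

theorem stmt_6_general (Ai : ℝ → ℝ)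
    (hAi : ∀ x : ℝ,
      Tendsto (fun R : ℝ => ∫ t in (0:ℝ)..R, Real.cos (t ^ 3 / 3 + x * t))
        atTop (nhds (Real.pi * Ai x)))
    (σ : Measure ℝ)
    (hmom : ∀ k : ℕ, Integrable (fun t => |t| ^ k) σ)
    (hinner : ∀ x y t : ℝ,
      IntegrableOn (fun u => Ai (x + t + u) * Ai (y + t + u)) (Set.Ioi 0))
    (n : ℕ) (x : Fin n → ℝ) (z : Fin n → ℂ) :
    (∑ i : Fin n, ∑ j : Fin n,
        z i * (starRingEnd ℂ) (z j) * (Ksig Ai σ (x i) (x j) : ℂ)).im = 0 ∧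
    0 ≤ (∑ i : Fin n, ∑ j : Fin n,
        z i * (starRingEnd ℂ) (z j) * (Ksig Ai σ (x i) (x j) : ℂ)).re := by
  have hK : ∑ i, ∑ j, z i * starRingEnd ℂ (z j) * (Ksig Ai σ (x i) (x j) : ℂ) =
      ∫ t, ((∫ u in Ioi 0, Complex.normSq (∑ i, z i * Ai (x i + t + u)) : ℝ) : ℂ) ∂σ := by
    simp only [Ksig]
    rw [sum_sum_mul_conj_integral fun i j =>
        integrable_integral_Ioi_airy_mul_airy hAi hmom (hinner (x i) (x j))]
    refine integral_congr_ae (.of_forall fun t => ?_)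
    dsimp only
    rw [sum_sum_mul_conj_integral fun i j => hinner (x i) (x j) t, ← integral_complex_ofReal]
    exact integral_congr_ae (.of_forall fun u =>
      sum_sum_mul_conj_ofReal_mul z fun i => Ai (x i + t + u))
  rw [hK, integral_complex_ofReal, Complex.ofReal_im, Complex.ofReal_re]
  exact ⟨rfl, integral_nonneg fun t => setIntegral_nonneg measurableSet_Ioi fun u _ =>
    Complex.normSq_nonneg _⟩

/-- The kernel `K_σ` is Hermitian positive semidefinite: for every
`n ∈ ℕ`, every `x : Fin n → ℝ` and every `z : Fin n → ℂ`, the complex number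
`Σ_{i,j} z(i)·conj(z(j))·K_σ(x(i), x(j))` has imaginary part `0` and real part `≥ 0`. -/
theorem stmt_6 (Ai : ℝ → ℝ)
    (hAi : ∀ x : ℝ,
      Tendsto (fun R : ℝ => ∫ t in (0:ℝ)..R, Real.cos (t ^ 3 / 3 + x * t))
        atTop (nhds (Real.pi * Ai x)))
    (σ : Measure ℝ) [IsProbabilityMeasure σ]
    (hmom : ∀ k : ℕ, Integrable (fun t => |t| ^ k) σ)
    (hinner : ∀ x y t : ℝ,
      IntegrableOn (fun u => Ai (x + t + u) * Ai (y + t + u)) (Set.Ioi 0))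
    (n : ℕ) (x : Fin n → ℝ) (z : Fin n → ℂ) :
    (∑ i : Fin n, ∑ j : Fin n,
        z i * (starRingEnd ℂ) (z j) * (Ksig Ai σ (x i) (x j) : ℂ)).im = 0 ∧
    0 ≤ (∑ i : Fin n, ∑ j : Fin n,
        z i * (starRingEnd ℂ) (z j) * (Ksig Ai σ (x i) (x j) : ℂ)).re :=
  stmt_6_general Ai hAi σ hmom hinner n x z
end

section
/- For every real z ≠ 0, the function x ↦ e^{i z x}·(1/2)·∫_{|x|}^∞ (e^{−t}/t) dt is (Lebesgue) integrable on ℝ and ∫_{−∞}^∞ e^{i z x}·(1/2)·(∫_{|x|}^∞ (e^{−t}/t) dt) dx = arctan(z)/z (a real number, viewed as a complex number); that is, the Fourier transform of the Milne–Schwarzschild kernel K(x) = (1/2)·E(|x|) with E(x) = ∫_x^∞ (e^{−t}/t) dt equals arctan(z)/z. -/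
/-!
Substituting `t = r s` gives `E(r) = ∫_{s>1} e^{-r s} / s ds`, so `e^{izx} K(x)` is the
superposition over `s > 1` of `e^{izx - s|x|} / (2s)`. The Fourier integral of `e^{-s|x|}` is
`2s / (s² + z²)` and its `L¹` norm is `2 / s`, so the double integral converges absolutely
(`∫_{s>1} s⁻² ds < ∞`); Fubini leaves `∫_{s>1} ds / (s² + z²) = arctan z / z`.
-/

open MeasureTheory Set Real
open Complex (I)
open scoped Complex

section FourierLaplace

variable (z : ℝ) {s : ℝ}

lemma cexp_mul_sub_mul_abs_of_nonpos {x : ℝ} (hx : x ≤ 0) :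
    cexp (I * z * x - s * |x|) = cexp ((I * z + s) * x) := by
  rw [abs_of_nonpos hx]; push_cast; ring_nf

lemma cexp_mul_sub_mul_abs_of_nonneg {x : ℝ} (hx : 0 ≤ x) :
    cexp (I * z * x - s * |x|) = cexp ((I * z - s) * x) := by
  rw [abs_of_nonneg hx]; ring_nf

lemma integrable_cexp_mul_sub_mul_abs (hs : 0 < s) :
    Integrable (fun x : ℝ => cexp (I * z * x - s * |x|)) := by
  have hIic : IntegrableOn (fun x : ℝ => cexp (I * z * x - s * |x|)) (Iic 0) :=
    (integrableOn_exp_mul_complex_Iic (a := I * z + s) (by simpa) 0).congr_fun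
      (fun x hx => (cexp_mul_sub_mul_abs_of_nonpos z hx).symm) measurableSet_Iic
  have hIoi : IntegrableOn (fun x : ℝ => cexp (I * z * x - s * |x|)) (Ioi 0) :=
    (integrableOn_exp_mul_complex_Ioi (a := I * z - s) (by simpa) 0).congr_fun
      (fun x hx => (cexp_mul_sub_mul_abs_of_nonneg z (le_of_lt hx)).symm) measurableSet_Ioi
  rw [← integrableOn_univ, ← Iic_union_Ioi (a := (0 : ℝ))]
  exact hIic.union hIoi

lemma integral_cexp_mul_sub_mul_abs (hs : 0 < s) :
    ∫ x : ℝ, cexp (I * z * x - s * |x|) = 2 * s / (s ^ 2 + z ^ 2) := by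
  have hf := integrable_cexp_mul_sub_mul_abs z hs
  rw [← intervalIntegral.integral_Iic_add_Ioi hf.integrableOn hf.integrableOn,
    setIntegral_congr_fun measurableSet_Iic fun x hx => cexp_mul_sub_mul_abs_of_nonpos z hx,
    setIntegral_congr_fun measurableSet_Ioi fun x hx =>
      cexp_mul_sub_mul_abs_of_nonneg z (le_of_lt hx),
    integral_exp_mul_complex_Iic (by simpa), integral_exp_mul_complex_Ioi (by simpa)]
  have h₁ : I * z + s ≠ 0 := fun h => by simpa [hs.ne'] using congrArg Complex.re h
  have h₂ : I * z - s ≠ 0 := fun h => by simpa [hs.ne'] using congrArg Complex.re h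
  have h₃ : (s : ℂ) ^ 2 + z ^ 2 ≠ 0 := by exact_mod_cast (by positivity : s ^ 2 + z ^ 2 ≠ 0)
  simp only [Complex.ofReal_zero, mul_zero, Complex.exp_zero]
  field_simp
  linear_combination (-(2 * (s : ℂ) * z ^ 2)) * Complex.I_sq

lemma integral_norm_cexp_mul_sub_mul_abs (hs : 0 < s) :
    ∫ x : ℝ, ‖cexp (I * z * x - s * |x|)‖ = 2 / s := by
  have hnorm (x : ℝ) : ‖cexp (I * z * x - s * |x|)‖ = rexp (-s * |x|) := by
    simp [Complex.norm_exp]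
  simp_rw [hnorm]
  rw [integral_comp_abs (f := fun x => rexp (-s * x)), integral_exp_mul_Ioi (neg_lt_zero.2 hs)]
  simp [div_eq_mul_inv]

lemma integral_cexp_mul_sub_mul_abs_div (hs : 0 < s) :
    ∫ x : ℝ, cexp (I * z * x - s * |x|) / (2 * s) = (((s ^ 2 + z ^ 2)⁻¹ : ℝ) : ℂ) := by
  have hs₀ : (s : ℂ) ≠ 0 := Complex.ofReal_ne_zero.2 hs.ne'
  have hsz : (s : ℂ) ^ 2 + z ^ 2 ≠ 0 := by exact_mod_cast (by positivity : s ^ 2 + z ^ 2 ≠ 0)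
  rw [integral_div, integral_cexp_mul_sub_mul_abs z hs]
  push_cast
  field_simp

end FourierLaplace

lemma setIntegral_Ioi_div_self_comp_mul (g : ℝ → ℝ) (a : ℝ) {r : ℝ} (hr : 0 < r) :
    ∫ t in Ioi (r * a), g t / t = ∫ s in Ioi a, g (r * s) / s := by
  have h := integral_comp_mul_left_Ioi (fun t => g t / t) a hr
  rw [smul_eq_mul, eq_inv_mul_iff_mul_eq₀ hr.ne', ← integral_const_mul] at h
  rw [← h]
  refine integral_congr_ae (Filter.Eventually.of_forall fun s => ?_)
  dsimp only
  rcases eq_or_ne s 0 with rfl | hs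
  · simp
  · field_simp

lemma integral_Ioi_one_inv_sq_add_sq_of_pos {z : ℝ} (hz : 0 < z) :
    ∫ s in Ioi (1 : ℝ), (s ^ 2 + z ^ 2)⁻¹ = arctan z / z := by
  have h :=
    integral_comp_mul_right_Ioi (fun u : ℝ => (z ^ 2)⁻¹ * (1 + u ^ 2)⁻¹) 1 (inv_pos.2 hz)
  have hscale (s : ℝ) : (z ^ 2)⁻¹ * (1 + (s * z⁻¹) ^ 2)⁻¹ = (s ^ 2 + z ^ 2)⁻¹ := by
    field_simp
    ring
  simp only [hscale, one_mul, smul_eq_mul, inv_inv] at h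
  rw [h, integral_const_mul, integral_Ioi_inv_one_add_sq, arctan_inv_of_pos hz]
  field_simp
  ring

lemma integral_Ioi_one_inv_sq_add_sq {z : ℝ} (hz : z ≠ 0) :
    ∫ s in Ioi (1 : ℝ), (s ^ 2 + z ^ 2)⁻¹ = arctan z / z := by
  rcases hz.lt_or_gt with hneg | hpos
  · rw [← neg_sq, integral_Ioi_one_inv_sq_add_sq_of_pos (neg_pos.2 hneg), arctan_neg,
      neg_div_neg_eq]
  · exact integral_Ioi_one_inv_sq_add_sq_of_pos hpos

lemma cexp_mul_half_integral_Ioi_abs_eq_setIntegral (z : ℝ) {x : ℝ} (hx : x ≠ 0) :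
    cexp (I * z * x) * (((1 / 2 : ℝ) * ∫ t in Ioi |x|, rexp (-t) / t : ℝ) : ℂ) =
      ∫ s in Ioi (1 : ℝ), cexp (I * z * x - s * |x|) / (2 * s) := by
  have hE := setIntegral_Ioi_div_self_comp_mul (fun t => rexp (-t)) 1 (abs_pos.2 hx)
  rw [mul_one] at hE
  rw [hE, ← integral_const_mul, ← integral_complex_ofReal, ← integral_const_mul]
  refine integral_congr_ae (Filter.Eventually.of_forall fun s => ?_)
  push_cast
  rw [sub_eq_add_neg, Complex.exp_add]
  ring_nf

lemma integrable_cexp_mul_sub_mul_abs_div_prod (z : ℝ) :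
    Integrable (Function.uncurry fun (x s : ℝ) => cexp (I * z * x - s * |x|) / (2 * s))
      (volume.prod (volume.restrict (Ioi 1))) := by
  have hmeas : Measurable fun p : ℝ × ℝ => cexp (I * z * p.1 - p.2 * |p.1|) / (2 * p.2) := by
    fun_prop
  refine (integrable_prod_iff' hmeas.aestronglyMeasurable).2 ⟨?_, ?_⟩
  · filter_upwards [ae_restrict_mem measurableSet_Ioi] with s hs
    exact (integrable_cexp_mul_sub_mul_abs z (one_pos.trans hs)).div_const _
  · have hnorm : ∀ᵐ s : ℝ ∂(volume.restrict (Ioi 1)),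
        s ^ (-2 : ℝ) = ∫ x : ℝ, ‖cexp (I * z * x - s * |x|) / (2 * s)‖ := by
      filter_upwards [ae_restrict_mem measurableSet_Ioi] with s hs
      have hs₀ : 0 < s := one_pos.trans hs
      simp only [norm_div, integral_div, integral_norm_cexp_mul_sub_mul_abs z hs₀]
      have h2s : ‖(2 * s : ℂ)‖ = 2 * s := by simp [hs₀.le]
      rw [h2s, rpow_neg hs₀.le, rpow_two]
      field_simp
    exact (integrableOn_Ioi_rpow_of_lt (by norm_num) one_pos).congr hnorm

/-- For every real `z ≠ 0`, the function
`x ↦ e^{i z x}·(1/2)·∫_{|x|}^∞ (e^{−t}/t) dt` is Lebesgue integrable on `ℝ` and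
`∫_{−∞}^∞ e^{i z x}·(1/2)·(∫_{|x|}^∞ (e^{−t}/t) dt) dx = arctan(z)/z`;
that is, the Fourier transform of the Milne–Schwarzschild kernel
`K(x) = (1/2)·E(|x|)` with `E(x) = ∫_x^∞ (e^{−t}/t) dt` equals `arctan(z)/z`. -/
theorem stmt_14 (z : ℝ) (hz : z ≠ 0) :
    Integrable (fun x : ℝ =>
      Complex.exp (Complex.I * z * x) *
        (((1 / 2 : ℝ) * ∫ t in Set.Ioi |x|, Real.exp (-t) / t : ℝ) : ℂ)) ∧
    ∫ x : ℝ, Complex.exp (Complex.I * z * x) *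
        (((1 / 2 : ℝ) * ∫ t in Set.Ioi |x|, Real.exp (-t) / t : ℝ) : ℂ) =
      ((Real.arctan z / z : ℝ) : ℂ) := by
  have hF := integrable_cexp_mul_sub_mul_abs_div_prod z
  have hK : (fun x : ℝ => cexp (I * z * x) *
        (((1 / 2 : ℝ) * ∫ t in Ioi |x|, rexp (-t) / t : ℝ) : ℂ)) =ᵐ[volume]
      fun x => ∫ s in Ioi (1 : ℝ), cexp (I * z * x - s * |x|) / (2 * s) := by
    filter_upwards [(by simp [ae_iff, measure_singleton] : ∀ᵐ x : ℝ, x ≠ 0)] with x hx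
    exact cexp_mul_half_integral_Ioi_abs_eq_setIntegral z hx
  refine ⟨hF.integral_prod_left.congr hK.symm, ?_⟩
  calc _ = ∫ x : ℝ, ∫ s in Ioi (1 : ℝ), cexp (I * z * x - s * |x|) / (2 * s) :=
        integral_congr_ae hK
    _ = ∫ s in Ioi (1 : ℝ), (((s ^ 2 + z ^ 2)⁻¹ : ℝ) : ℂ) := by
        rw [integral_integral_swap hF]
        exact setIntegral_congr_fun measurableSet_Ioi fun s hs =>
          integral_cexp_mul_sub_mul_abs_div z (one_pos.trans hs)
    _ = _ := by rw [integral_complex_ofReal, integral_Ioi_one_inv_sq_add_sq hz]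
end
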